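/- arXiv:1902.05154 — 3 statements merged into one kernel-verified Lean document; each statement's English description precedes it below -/
import Mathlib

section
/- Let μ be a locally determined positive measure on a σ-algebra Σ. Then the collection Σ^f = {B ∈ Σ : μ(B) < ∞} is a δ-ring (a ring of sets closed under countable intersections), the σ-algebra (Σ^f)^loc := {A ⊆ Ω : A ∩ B ∈ Σ^f for all B ∈ Σ^f} equals Σ, and the variation of the restriction λ = μ|_{Σ^f} equals μ. -/
open MeasureTheory ENNReal
open scoped ENNReal

noncomputable section

variable {Ω : Type*} [MeasurableSpace Ω]
variable {X : Type*} [NormedAddCommGroup X] [NormedSpace ℝ X] [CompleteSpace X]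

/-- `F` is weakly `μ`-measurable. -/
def WeaklyMeasurable (μ : Measure Ω) (F : Ω → X) : Prop :=
  ∀ x' : StrongDual ℝ X, AEStronglyMeasurable (fun t => x' (F t)) μ

/-- `F` is Dunford integrable. -/
def DunfordIntegrable (μ : Measure Ω) (F : Ω → X) : Prop :=
  WeaklyMeasurable μ F ∧ ∀ x' : StrongDual ℝ X, Integrable (fun t => x' (F t)) μ

/-- The Dunford norm `sup_{‖x*‖ ≤ 1} ∫ |⟨F, x*⟩| dμ` (in `ℝ≥0∞`). -/
def dunfordNorm (μ : Measure Ω) (F : Ω → X) : ℝ≥0∞ :=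
  ⨆ (x' : StrongDual ℝ X) (_ : ‖x'‖ ≤ 1), ∫⁻ t, ENNReal.ofReal |x' (F t)| ∂μ

/-- `x` is the Pettis integral of `F` over `A`. -/
def IsPettisIntegralOn (μ : Measure Ω) (F : Ω → X) (A : Set Ω) (x : X) : Prop :=
  ∀ x' : StrongDual ℝ X, x' x = ∫ t in A, x' (F t) ∂μ

/-- `F` is Pettis integrable. -/
def PettisIntegrable (μ : Measure Ω) (F : Ω → X) : Prop :=
  DunfordIntegrable μ F ∧ ∀ A : Set Ω, MeasurableSet A → ∃ x : X, IsPettisIntegralOn μ F A x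

-- The Pettis integral of `F` over `A` (junk value `0` if it does not exist).
open Classical in
def pettisIntegral (μ : Measure Ω) (F : Ω → X) (A : Set Ω) : X :=
  if h : ∃ x : X, IsPettisIntegralOn μ F A x then h.choose else 0

/-- The δ-ring `Σ^f` of measurable sets of finite measure. -/
def finiteMeasureSets (μ : Measure Ω) : Set (Set Ω) :=
  {B | MeasurableSet B ∧ μ B < ∞}

/-- `F` is locally Pettis integrable. -/
def LocPettisIntegrable (μ : Measure Ω) (F : Ω → X) : Prop :=
  WeaklyMeasurable μ F ∧ ∀ B ∈ finiteMeasureSets μ, PettisIntegrable μ (B.indicator F)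

/-- `F` is locally Bochner integrable. -/
def LocBochnerIntegrable (μ : Measure Ω) (F : Ω → X) : Prop :=
  AEStronglyMeasurable F μ ∧ ∀ B ∈ finiteMeasureSets μ, Integrable (B.indicator F) μ

/-- The variation of a scalar set function `lam` defined on a δ-ring `R`,
evaluated at `A`: the supremum of `Σ_j |lam A_j|` over finite disjoint families
of members of `R` contained in `A`. -/
def scalarVariation (R : Set (Set Ω)) (lam : Set Ω → ℝ) (A : Set Ω) : ℝ≥0∞ :=
  ⨆ (P : Finset (Set Ω)) (_ : ∀ B ∈ P, B ∈ R ∧ B ⊆ A)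
    (_ : (P : Set (Set Ω)).PairwiseDisjoint id), ∑ B ∈ P, ENNReal.ofReal |lam B|

/-- The variation of a vector set function `ν` defined on a δ-ring `R`. -/
def vectorVariation (R : Set (Set Ω)) (ν : Set Ω → X) (A : Set Ω) : ℝ≥0∞ :=
  ⨆ (P : Finset (Set Ω)) (_ : ∀ B ∈ P, B ∈ R ∧ B ⊆ A)
    (_ : (P : Set (Set Ω)).PairwiseDisjoint id), ∑ B ∈ P, ENNReal.ofReal ‖ν B‖

/-- The semivariation of a vector set function `ν` defined on a δ-ring `R`. -/
def semivariation (R : Set (Set Ω)) (ν : Set Ω → X) (A : Set Ω) : ℝ≥0∞ :=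
  ⨆ (x' : StrongDual ℝ X) (_ : ‖x'‖ ≤ 1),
    scalarVariation R (fun B => x' (ν B)) A

/-- `μ` is semi-finite. -/
def SemiFinite (μ : Measure Ω) : Prop :=
  ∀ A : Set Ω, MeasurableSet A → 0 < μ A →
    ∃ B ⊆ A, MeasurableSet B ∧ 0 < μ B ∧ μ B < ∞

/-- `μ` is locally determined: it is semi-finite and a set is measurable as soon as
its intersection with every finite-measure set is measurable. -/
def LocallyDetermined (μ : Measure Ω) : Prop :=
  SemiFinite μ ∧ ∀ A : Set Ω,
    (∀ B ∈ finiteMeasureSets μ, MeasurableSet (A ∩ B)) → MeasurableSet A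

section

variable {μ : Measure Ω} {A B : Set Ω}

lemma union_mem_finiteMeasureSets (hA : A ∈ finiteMeasureSets μ) (hB : B ∈ finiteMeasureSets μ) :
    A ∪ B ∈ finiteMeasureSets μ :=
  ⟨hA.1.union hB.1, measure_union_lt_top hA.2 hB.2⟩

lemma diff_mem_finiteMeasureSets (hA : A ∈ finiteMeasureSets μ) (hB : MeasurableSet B) :
    A \ B ∈ finiteMeasureSets μ :=
  ⟨hA.1.diff hB, (measure_mono Set.sdiff_subset).trans_lt hA.2⟩

lemma inter_mem_finiteMeasureSets (hA : MeasurableSet A) (hB : B ∈ finiteMeasureSets μ) :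
    A ∩ B ∈ finiteMeasureSets μ :=
  ⟨hA.inter hB.1, (measure_mono Set.inter_subset_right).trans_lt hB.2⟩

lemma iInter_mem_finiteMeasureSets {ι : Type*} [Countable ι] (i : ι) {A : ι → Set Ω}
    (hA : ∀ i, A i ∈ finiteMeasureSets μ) : (⋂ i, A i) ∈ finiteMeasureSets μ :=
  ⟨.iInter fun i => (hA i).1, (measure_mono (Set.iInter_subset A i)).trans_lt (hA i).2⟩

lemma exists_measure_iUnion_eq_iSup (μ : Measure Ω) {𝒞 : Set (Set Ω)}
    (hu : ∀ B ∈ 𝒞, ∀ B' ∈ 𝒞, B ∪ B' ∈ 𝒞) (hne : 𝒞.Nonempty) :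
    ∃ b : ℕ → Set Ω, (∀ n, b n ∈ 𝒞) ∧ μ (⋃ n, b n) = ⨆ B ∈ 𝒞, μ B := by
  obtain ⟨u, -, hu_lim, hu_mem⟩ := exists_seq_tendsto_sSup (hne.image μ) (OrderTop.bddAbove _)
  choose c hc hcu using hu_mem
  have hacc : ∀ n, Set.accumulate c n ∈ 𝒞 := by
    intro n
    induction n with
    | zero => simpa using hc 0
    | succ n ih => simpa using hu _ ih _ (hc (n + 1))
  refine ⟨Set.accumulate c, hacc, le_antisymm ?_ ?_⟩
  · rw [Set.monotone_accumulate.measure_iUnion]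
    exact iSup_le fun n => le_iSup₂ (f := fun B _ => μ B) _ (hacc n)
  · rw [← sSup_image]
    refine le_of_tendsto' hu_lim fun n => ?_
    rw [← hcu n]
    exact measure_mono (Set.subset_accumulate.trans (Set.subset_iUnion _ n))

/-- The subsets of `A` in `Σ^f` have a largest measure `μ C`, attained by a countable union;
if `μ C < μ A`, semi-finiteness applied to `A \ C` enlarges `C`. -/
lemma SemiFinite.measure_le_of_forall_finiteMeasureSets (hμ : SemiFinite μ) {c : ℝ≥0∞}
    (hA : MeasurableSet A) (h : ∀ B ∈ finiteMeasureSets μ, B ⊆ A → μ B ≤ c) : μ A ≤ c := by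
  set 𝒞 := {B | B ∈ finiteMeasureSets μ ∧ B ⊆ A}
  obtain ⟨b, hb, hbμ⟩ := exists_measure_iUnion_eq_iSup μ (𝒞 := 𝒞)
    (fun B hB B' hB' => ⟨union_mem_finiteMeasureSets hB.1 hB'.1, Set.union_subset hB.2 hB'.2⟩)
    ⟨∅, ⟨.empty, by simp⟩, Set.empty_subset A⟩
  set C := ⋃ n, b n
  have hCA : C ⊆ A := Set.iUnion_subset fun n => (hb n).2
  have hCm : MeasurableSet C := .iUnion fun n => (hb n).1.1
  have hC_max : ∀ B ∈ 𝒞, μ B ≤ μ C := fun B hB => hbμ ▸ le_iSup₂ (f := fun B _ => μ B) B hB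
  have hCc : μ C ≤ c := hbμ ▸ iSup₂_le fun B hB => h B hB.1 hB.2
  by_contra! hcA
  have hCf : μ C < ∞ := hCc.trans_lt (hcA.trans_le le_top)
  have hAC : 0 < μ (A \ C) := by
    by_contra! h0
    have : μ A ≤ μ C := by
      rw [← Set.union_sdiff_cancel hCA]
      exact (measure_union_le _ _).trans (by simp [nonpos_iff_eq_zero.mp h0])
    exact (this.trans hCc).not_gt hcA
  obtain ⟨D, hDA, hDm, hD0, hDf⟩ := hμ _ (hA.diff hCm) hAC
  have hCD : C ∪ D ∈ 𝒞 :=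
    ⟨union_mem_finiteMeasureSets ⟨hCm, hCf⟩ ⟨hDm, hDf⟩,
      Set.union_subset hCA (hDA.trans Set.sdiff_subset)⟩
  have hdisj : Disjoint C D := Set.disjoint_sdiff_right.mono_right hDA
  have hCD_le := hC_max _ hCD
  rw [measure_union hdisj hDm] at hCD_le
  exact (ENNReal.lt_add_right hCf.ne hD0.ne').not_ge hCD_le

lemma scalarVariation_toReal_le_measure (μ : Measure Ω) (A : Set Ω) :
    scalarVariation (finiteMeasureSets μ) (fun B => (μ B).toReal) A ≤ μ A := by
  refine iSup_le fun P => iSup₂_le fun hP hPd => ?_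
  have hterm : ∀ B ∈ P, ENNReal.ofReal |(μ B).toReal| = μ B := fun B hB => by
    rw [abs_of_nonneg ENNReal.toReal_nonneg, ENNReal.ofReal_toReal (hP B hB).1.2.ne]
  calc ∑ B ∈ P, ENNReal.ofReal |(μ B).toReal| = μ (⋃ B ∈ P, B) := by
        rw [Finset.sum_congr rfl hterm]
        exact (measure_biUnion_finset hPd fun B hB => (hP B hB).1.1).symm
    _ ≤ μ A := measure_mono (Set.iUnion₂_subset fun B hB => (hP B hB).2)

lemma measure_le_scalarVariation_toReal (hB : B ∈ finiteMeasureSets μ) (hBA : B ⊆ A) :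
    μ B ≤ scalarVariation (finiteMeasureSets μ) (fun B => (μ B).toReal) A := by
  refine le_iSup₂_of_le {B} (by simpa using ⟨hB, hBA⟩) (le_iSup_of_le (by simp) ?_)
  simp [ENNReal.ofReal_toReal hB.2.ne]

end

/-- for a locally determined `μ`, `Σ^f` is a δ-ring, `(Σ^f)^loc = Σ`,
and the variation of `μ` restricted to `Σ^f` equals `μ`. -/
theorem stmt5 (μ : Measure Ω) (hμ : LocallyDetermined μ) :
    (∀ A ∈ finiteMeasureSets μ, ∀ B ∈ finiteMeasureSets μ,
      A ∪ B ∈ finiteMeasureSets μ ∧ A \ B ∈ finiteMeasureSets μ) ∧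
    (∀ A : ℕ → Set Ω, (∀ n, A n ∈ finiteMeasureSets μ) →
      (⋂ n, A n) ∈ finiteMeasureSets μ) ∧
    ({A : Set Ω | ∀ B ∈ finiteMeasureSets μ, A ∩ B ∈ finiteMeasureSets μ}
      = {A : Set Ω | MeasurableSet A}) ∧
    (∀ A : Set Ω, MeasurableSet A →
      scalarVariation (finiteMeasureSets μ) (fun B => (μ B).toReal) A = μ A) := by
  refine ⟨fun A hA B hB => ⟨union_mem_finiteMeasureSets hA hB, diff_mem_finiteMeasureSets hA hB.1⟩,
    fun A hA => iInter_mem_finiteMeasureSets 0 hA, ?_, fun A hA => ?_⟩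
  · ext A
    exact ⟨fun h => hμ.2 A fun B hB => (h B hB).1, fun hA B hB => inter_mem_finiteMeasureSets hA hB⟩
  · exact le_antisymm (scalarVariation_toReal_le_measure μ A)
      (hμ.1.measure_le_of_forall_finiteMeasureSets hA fun B hB hBA =>
        measure_le_scalarVariation_toReal hB hBA)
end
end

section
/- Let μ be a locally determined positive measure on Σ, X a Banach space, and F : Ω → X locally Pettis integrable. Then F is Dunford integrable if and only if the vector measure ν_F on Σ^f has bounded semivariation, i.e., ‖ν_F‖(Ω) < ∞. -/
open MeasureTheory ENNReal
open scoped ENNReal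

noncomputable section

variable {Ω : Type*} [MeasurableSpace Ω]
variable {X : Type*} [NormedAddCommGroup X] [NormedSpace ℝ X] [CompleteSpace X]

/-!
Both conditions are equivalent to boundedness of `ν_F` on `Σ^f`.

If `F` is Dunford integrable then `|x*(ν_F B)| ≤ ∫ |⟨F, x*⟩| dμ` for all `B ∈ Σ^f`, so the
Banach–Steinhaus theorem, applied to the vectors `ν_F B` seen in the bidual, bounds `‖ν_F B‖`
uniformly. Splitting a disjoint family according to the sign of `x*(ν_F B)` and using finite
additivity of `ν_F`, the semivariation is at most twice that bound.

Conversely `‖ν_F B‖ ≤ ‖ν_F‖(Ω)` by Hahn–Banach, and splitting `B` according to the sign of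
`⟨F, x*⟩` gives `∫_B |⟨F, x*⟩| dμ ≤ 2 ‖x*‖ ‖ν_F‖(Ω)` for every `B ∈ Σ^f`. For a semi-finite
measure such a bound over `Σ^f` bounds the whole integral: each level set `{|⟨F, x*⟩| > 1/n}`
has finite measure, because a measurable set whose subsets of finite measure all have measure
at most `c` has itself measure at most `c`.
-/

theorem Finset.sum_abs_le_two_mul_of_forall_subset {ι : Type*} {P : Finset ι} {f : ι → ℝ}
    {c : ℝ} (h : ∀ Q ⊆ P, |∑ i ∈ Q, f i| ≤ c) : ∑ i ∈ P, |f i| ≤ 2 * c := by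
  classical
  have hpos : ∑ i ∈ P with 0 ≤ f i, |f i| ≤ c := by
    rw [Finset.sum_congr rfl fun i hi => abs_of_nonneg (Finset.mem_filter.1 hi).2]
    exact (le_abs_self _).trans (h _ (Finset.filter_subset _ P))
  have hneg : ∑ i ∈ P with ¬0 ≤ f i, |f i| ≤ c := by
    rw [Finset.sum_congr rfl fun i hi => abs_of_neg (not_le.1 (Finset.mem_filter.1 hi).2),
      Finset.sum_neg_distrib]
    exact (neg_le_abs _).trans (h _ (Finset.filter_subset _ P))
  rw [← Finset.sum_filter_add_sum_filter_not P (fun i => 0 ≤ f i)]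
  linarith

section SetFunction

variable {α E : Type*} [NormedAddCommGroup E] [NormedSpace ℝ E]

theorem ofReal_norm_le_semivariation {R : Set (Set α)} (ν : Set α → E) {A B : Set α}
    (hB : B ∈ R) (hBA : B ⊆ A) : ENNReal.ofReal ‖ν B‖ ≤ semivariation R ν A := by
  obtain ⟨x', hx', hx'B⟩ := exists_dual_vector'' ℝ (ν B)
  refine le_iSup₂_of_le x' hx' (le_iSup₂_of_le {B} ?_ (le_iSup_of_le ?_ ?_))
  · simpa using ⟨hB, hBA⟩
  · simp
  · simp [hx'B]

theorem semivariation_le_two_mul {R : Set (Set α)} {ν : Set α → E} {c : ℝ}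
    (hR : IsSetRing R)
    (hν : ∀ P : Finset (Set α), (∀ B ∈ P, B ∈ R) → (P : Set (Set α)).PairwiseDisjoint id →
      ν (⋃ B ∈ P, B) = ∑ B ∈ P, ν B)
    (hc : ∀ B ∈ R, ‖ν B‖ ≤ c) (A : Set α) :
    semivariation R ν A ≤ ENNReal.ofReal (2 * c) := by
  refine iSup₂_le fun x' hx' => iSup₂_le fun P hP => iSup_le fun hdisj => ?_
  rw [← ENNReal.ofReal_sum_of_nonneg fun B _ => abs_nonneg _]
  refine ENNReal.ofReal_le_ofReal (Finset.sum_abs_le_two_mul_of_forall_subset fun Q hQ => ?_)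
  have hQR : ∀ B ∈ Q, B ∈ R := fun B hB => (hP B (hQ hB)).1
  calc |∑ B ∈ Q, x' (ν B)| = |x' (ν (⋃ B ∈ Q, B))| := by
        rw [hν Q hQR (hdisj.subset (Finset.coe_subset.2 hQ)), map_sum]
    _ ≤ ‖x'‖ * ‖ν (⋃ B ∈ Q, B)‖ := x'.le_opNorm _
    _ ≤ 1 * c := mul_le_mul hx' (hc _ (hR.biUnion_mem Q hQR)) (norm_nonneg _) zero_le_one
    _ = c := one_mul c

end SetFunction

section Measure

variable {α : Type*} [MeasurableSpace α] {μ : Measure α}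

theorem isSetRing_finiteMeasureSets : IsSetRing (finiteMeasureSets μ) where
  empty_mem := ⟨MeasurableSet.empty, by simp⟩
  union_mem _ _ hs ht :=
    ⟨hs.1.union ht.1, (measure_union_le _ _).trans_lt (ENNReal.add_lt_top.2 ⟨hs.2, ht.2⟩)⟩
  sdiff_mem _ _ hs ht := ⟨hs.1.diff ht.1, (measure_mono Set.sdiff_subset).trans_lt hs.2⟩

theorem SemiFinite.measure_eq_iSup (hμ : SemiFinite μ) {A : Set α} (hA : MeasurableSet A) :
    μ A = ⨆ B ∈ finiteMeasureSets μ, ⨆ (_ : B ⊆ A), μ B := by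
  set S := {B ∈ finiteMeasureSets μ | B ⊆ A}
  set s := ⨆ B ∈ finiteMeasureSets μ, ⨆ (_ : B ⊆ A), μ B
  refine le_antisymm ?_ (iSup₂_le fun B _ => iSup_le fun hBA => measure_mono hBA)
  rcases eq_or_ne s ∞ with hs_top | hs_top
  · exact hs_top ▸ le_top
  have hs : IsLUB (μ '' S) s := by
    have hs_eq : s = sSup (μ '' S) := by
      rw [sSup_image]
      simp only [S, s, Set.mem_ofPred_eq, iSup_and]
    exact hs_eq ▸ isLUB_sSup _
  have hSs : ∀ B ∈ S, μ B ≤ s := fun B hB => hs.1 ⟨B, hB, rfl⟩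
  obtain ⟨u, -, -, hu_lim, hu_mem⟩ := hs.exists_seq_monotone_tendsto
    ⟨0, ∅, ⟨isSetRing_finiteMeasureSets.empty_mem, by simp⟩, by simp⟩
  choose B hBS hBu using hu_mem
  set C := ⋃ n, B n
  have hC_le : μ C ≤ s := by
    rw [measure_iUnion_eq_iSup_accumulate]
    exact iSup_le fun n => hSs _
      ⟨isSetRing_finiteMeasureSets.accumulate_mem (fun k => (hBS k).1) n,
        fun x hx => (hBS _).2 (Set.mem_accumulate.1 hx).choose_spec.2⟩
  have hs_le : s ≤ μ C :=
    le_of_tendsto' hu_lim fun n => hBu n ▸ measure_mono (Set.subset_iUnion B n)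
  have hC : C ∈ S := ⟨⟨MeasurableSet.iUnion fun n => (hBS n).1.1, hC_le.trans_lt hs_top.lt_top⟩,
    Set.iUnion_subset fun n => (hBS n).2⟩
  -- `C` attains the supremum, so semi-finiteness leaves no room for positive measure in `A \ C`.
  have hAC : μ (A \ C) = 0 := by
    by_contra hpos
    obtain ⟨E, hE_sub, hE_meas, hE_pos, hE_fin⟩ :=
      hμ _ (hA.diff hC.1.1) (pos_iff_ne_zero.2 hpos)
    have hCE : C ∪ E ∈ S := ⟨isSetRing_finiteMeasureSets.union_mem hC.1 ⟨hE_meas, hE_fin⟩,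
      Set.union_subset hC.2 (hE_sub.trans Set.sdiff_subset)⟩
    have hsE : s + μ E ≤ s := calc
      s + μ E ≤ μ C + μ E := add_le_add_left hs_le _
      _ = μ (C ∪ E) := (measure_union (Set.disjoint_left.2 fun x hxC hxE => (hE_sub hxE).2 hxC)
          hE_meas).symm
      _ ≤ s := hSs _ hCE
    exact hE_pos.not_ge ((ENNReal.add_le_add_iff_left hs_top).1 (by rwa [add_zero]))
  exact (measure_eq_measure_of_null_sdiff hC.2 hAC).symm.trans_le hC_le

theorem SemiFinite.lintegral_le_of_forall_setLIntegral_le (hμ : SemiFinite μ) {f : α → ℝ≥0∞}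
    (hf : Measurable f) {c : ℝ≥0∞} (hc : ∀ B ∈ finiteMeasureSets μ, ∫⁻ x in B, f x ∂μ ≤ c) :
    ∫⁻ x, f x ∂μ ≤ c := by
  rcases eq_or_ne c ∞ with rfl | hc_top
  · exact le_top
  set A : ℕ → Set α := fun n => {x | (n : ℝ≥0∞)⁻¹ < f x}
  have hA_meas (n : ℕ) : MeasurableSet (A n) := measurableSet_lt measurable_const hf
  have hA_fin (n : ℕ) : A n ∈ finiteMeasureSets μ := by
    refine ⟨hA_meas n,
      lt_of_le_of_lt (b := c * n) ?_ (ENNReal.mul_lt_top hc_top.lt_top (by simp))⟩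
    rw [hμ.measure_eq_iSup (hA_meas n)]
    refine iSup₂_le fun B hB => iSup_le fun hBA => ?_
    rw [← ENNReal.div_le_iff_le_mul (Or.inr hc_top) (Or.inl (by simp)), ENNReal.div_eq_inv_mul,
      ← setLIntegral_const]
    exact (setLIntegral_mono hf fun x hx => (hBA hx).le).trans (hc B hB)
  have hA_mono : Monotone A := fun m n hmn x (hx : _ < _) =>
    lt_of_le_of_lt (ENNReal.inv_le_inv.2 (Nat.cast_le.2 hmn)) hx
  have hf_supp : Function.support f ⊆ ⋃ n, A n := fun x hx =>
    Set.mem_iUnion.2 (ENNReal.exists_inv_nat_lt hx)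
  calc ∫⁻ x, f x ∂μ = ⨆ n, ∫⁻ x in A n, f x ∂μ := by
        rw [← setLIntegral_iUnion_of_directed f hA_mono.directed_le,
          setLIntegral_eq_of_support_subset hf_supp]
    _ ≤ c := iSup_le fun n => hc _ (hA_fin n)

theorem setIntegral_abs_le_two_mul_of_forall_subset {g : α → ℝ} (hg : Measurable g) {B : Set α}
    (hB : MeasurableSet B) (hgB : IntegrableOn g B μ) {c : ℝ}
    (hc : ∀ S, MeasurableSet S → S ⊆ B → |∫ x in S, g x ∂μ| ≤ c) :
    ∫ x in B, |g x| ∂μ ≤ 2 * c := by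
  have hP : MeasurableSet {x | 0 ≤ g x} := measurableSet_le measurable_const hg
  have hN : MeasurableSet {x | g x ≤ 0} := measurableSet_le hg measurable_const
  have hpos := (le_abs_self _).trans (hc _ (hP.inter hB) Set.inter_subset_right)
  have hneg := (neg_le_abs _).trans (hc _ (hN.inter hB) Set.inter_subset_right)
  have h := integral_norm_eq_pos_sub_neg hgB
  rw [Measure.restrict_restrict hP, Measure.restrict_restrict hN] at h
  simp only [Real.norm_eq_abs] at h
  linarith

end Measure

section Pettis

variable {α E : Type*} [MeasurableSpace α] [NormedAddCommGroup E] [NormedSpace ℝ E]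
  {μ : Measure α} {F : α → E} {B : Set α}

theorem LocPettisIntegrable.integrableOn (hF : LocPettisIntegrable μ F)
    (hB : B ∈ finiteMeasureSets μ) (x' : StrongDual ℝ E) :
    IntegrableOn (fun t => x' (F t)) B μ := by
  have h : Integrable (B.indicator fun t => x' (F t)) μ :=
    (Set.indicator_comp_of_zero (map_zero x')).symm ▸ (hF.2 B hB).1.2 x'
  exact (integrable_indicator_iff hB.1).1 h

theorem LocPettisIntegrable.apply_pettisIntegral (hF : LocPettisIntegrable μ F)
    (hB : B ∈ finiteMeasureSets μ) (x' : StrongDual ℝ E) :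
    x' (pettisIntegral μ F B) = ∫ t in B, x' (F t) ∂μ := by
  have hex : ∃ x : E, IsPettisIntegralOn μ F B x := by
    obtain ⟨x, hx⟩ := (hF.2 B hB).2 B hB.1
    refine ⟨x, fun y' => (hx y').trans ?_⟩
    exact setIntegral_congr_fun hB.1 fun t ht => by rw [Set.indicator_of_mem ht]
  rw [pettisIntegral, dif_pos hex]
  exact hex.choose_spec x'

theorem LocPettisIntegrable.pettisIntegral_biUnion (hF : LocPettisIntegrable μ F)
    (P : Finset (Set α)) (hP : ∀ B ∈ P, B ∈ finiteMeasureSets μ)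
    (hdisj : (P : Set (Set α)).PairwiseDisjoint id) :
    pettisIntegral μ F (⋃ B ∈ P, B) = ∑ B ∈ P, pettisIntegral μ F B := by
  refine (SeparatingDual.eq_iff_forall_dual_eq (R := ℝ)).2 fun x' => ?_
  rw [hF.apply_pettisIntegral (isSetRing_finiteMeasureSets.biUnion_mem P hP), map_sum,
    integral_biUnion_finset P (fun B hB => (hP B hB).1) hdisj
      (fun B hB => hF.integrableOn (hP B hB) x')]
  exact Finset.sum_congr rfl fun B hB => (hF.apply_pettisIntegral (hP B hB) x').symm

theorem LocPettisIntegrable.exists_norm_pettisIntegral_le (hF : LocPettisIntegrable μ F)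
    (hD : DunfordIntegrable μ F) :
    ∃ c, ∀ B ∈ finiteMeasureSets μ, ‖pettisIntegral μ F B‖ ≤ c := by
  have hpointwise (x' : StrongDual ℝ E) : ∃ C, ∀ B : finiteMeasureSets μ,
      ‖NormedSpace.inclusionInDoubleDual ℝ E (pettisIntegral μ F B) x'‖ ≤ C := by
    refine ⟨∫ t, ‖x' (F t)‖ ∂μ, fun B => ?_⟩
    rw [NormedSpace.dual_def, hF.apply_pettisIntegral B.2]
    exact (norm_integral_le_integral_norm (fun t => x' (F t))).trans
      (setIntegral_le_integral (hD.2 x').norm (.of_forall fun t => norm_nonneg _))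
  obtain ⟨c, hc⟩ := banach_steinhaus hpointwise
  refine ⟨c, fun B hB => ?_⟩
  rw [← (NormedSpace.inclusionInDoubleDualLi (E := E) ℝ).norm_map]
  exact hc ⟨B, hB⟩

theorem LocPettisIntegrable.dunfordIntegrable (hμ : SemiFinite μ) (hF : LocPettisIntegrable μ F)
    {c : ℝ} (hc : ∀ B ∈ finiteMeasureSets μ, ‖pettisIntegral μ F B‖ ≤ c) :
    DunfordIntegrable μ F := by
  refine ⟨hF.1, fun x' => ?_⟩
  set g := (hF.1 x').mk
  have hg : Measurable g := (hF.1 x').stronglyMeasurable_mk.measurable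
  have hFg : (fun t => x' (F t)) =ᵐ[μ] g := (hF.1 x').ae_eq_mk
  have hgB {B} (hB : B ∈ finiteMeasureSets μ) : IntegrableOn g B μ :=
    (hF.integrableOn hB x').congr_fun_ae (ae_restrict_of_ae hFg)
  have hbound {B} (hB : B ∈ finiteMeasureSets μ) :
      ∫⁻ t in B, ENNReal.ofReal |g t| ∂μ ≤ ENNReal.ofReal (2 * (‖x'‖ * c)) := by
    rw [← ofReal_integral_eq_lintegral_ofReal (hgB hB).abs (.of_forall fun t => abs_nonneg _)]
    refine ENNReal.ofReal_le_ofReal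
      (setIntegral_abs_le_two_mul_of_forall_subset hg hB.1 (hgB hB) fun S hS hSB => ?_)
    have hS' : S ∈ finiteMeasureSets μ := ⟨hS, (measure_mono hSB).trans_lt hB.2⟩
    calc |∫ t in S, g t ∂μ| = |x' (pettisIntegral μ F S)| := by
          rw [hF.apply_pettisIntegral hS', integral_congr_ae (ae_restrict_of_ae hFg)]
      _ ≤ ‖x'‖ * ‖pettisIntegral μ F S‖ := x'.le_opNorm _
      _ ≤ ‖x'‖ * c := mul_le_mul_of_nonneg_left (hc S hS') (norm_nonneg _)
  refine (integrable_congr hFg).2 ⟨hg.aestronglyMeasurable, ?_⟩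
  rw [hasFiniteIntegral_iff_norm]
  simp only [Real.norm_eq_abs]
  exact (hμ.lintegral_le_of_forall_setLIntegral_le (by fun_prop) fun B hB => hbound hB).trans_lt
    ENNReal.ofReal_lt_top

end Pettis

/-- `F` is Dunford integrable iff `ν_F` has bounded semivariation. -/
theorem stmt10 (μ : Measure Ω) (hμ : LocallyDetermined μ)
    (F : Ω → X) (hF : LocPettisIntegrable μ F) :
    DunfordIntegrable μ F ↔
      semivariation (finiteMeasureSets μ) (pettisIntegral μ F) Set.univ < ∞ := by
  constructor
  · intro hD
    obtain ⟨c, hc⟩ := hF.exists_norm_pettisIntegral_le hD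
    exact (semivariation_le_two_mul isSetRing_finiteMeasureSets hF.pettisIntegral_biUnion hc
      Set.univ).trans_lt ENNReal.ofReal_lt_top
  · intro hν
    exact hF.dunfordIntegrable hμ.1 fun B hB => (ENNReal.ofReal_le_iff_le_toReal hν.ne).1
      (ofReal_norm_le_semivariation _ hB (Set.subset_univ B))

end
end

section
/- Let μ be a locally determined positive measure on Σ and F : Ω → X strongly μ-measurable. Then F is Bochner integrable if and only if F is locally Bochner integrable and the vector measure ν_F has bounded variation. -/
/-!
For any `F`, a disjoint family `B₁, …, Bₙ` in `Σ^f` gives `∑ ‖∫_{Bᵢ} F‖ ≤ ∫ ‖F‖`, so `|ν_F|(Ω)`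
is at most `∫ ‖F‖`. Conversely, on each `B ∈ Σ^f` the function `F` is Bochner integrable, and the
variation formula for the vector measure with density `F` gives `∫_B ‖F‖ ≤ |ν_F|(B) ≤ |ν_F|(Ω)`.
Semi-finiteness turns these local bounds into a global one: a measurable set whose finite-measure
subsets all have measure at most `M` has measure at most `M`, hence every simple function below
`‖F‖` is supported on a set of finite measure, and its integral is bounded by `|ν_F|(Ω)`.
-/

open MeasureTheory ENNReal
open scoped ENNReal

noncomputable section

variable {Ω : Type*} [MeasurableSpace Ω]
variable {X : Type*} [NormedAddCommGroup X] [NormedSpace ℝ X] [CompleteSpace X]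

lemma SemiFinite.measure_le_of_forall_subset_le {μ : Measure Ω} (hμ : SemiFinite μ)
    {A : Set Ω} (hA : MeasurableSet A) {M : ℝ≥0∞}
    (hM : ∀ B ⊆ A, MeasurableSet B → μ B < ∞ → μ B ≤ M) : μ A ≤ M := by
  rcases eq_or_ne M ∞ with rfl | hM_top
  · exact le_top
  set S : Set ℝ≥0∞ := μ '' {B | B ⊆ A ∧ MeasurableSet B ∧ μ B < ∞}
  obtain ⟨u, -, hu, huS⟩ :=
    exists_seq_tendsto_sSup (S := S) ⟨0, ∅, by simp⟩ (OrderTop.bddAbove S)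
  choose B hB hμB using huS
  set C := ⋃ n, B n
  have hCA : C ⊆ A := Set.iUnion_subset fun n => (hB n).1
  have hCm : MeasurableSet C := MeasurableSet.iUnion fun n => (hB n).2.1
  have hCM : μ C ≤ M := by
    rw [measure_iUnion_eq_iSup_accumulate]
    refine iSup_le fun n => hM _ (Set.iUnion₂_subset fun k _ => (hB k).1)
      (MeasurableSet.biUnion (Set.to_countable _) fun k _ => (hB k).2.1)
      (measure_biUnion_lt_top (Set.finite_Iic n) fun k _ => (hB k).2.2)
  have hC_top : μ C ≠ ∞ := (hCM.trans_lt hM_top.lt_top).ne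
  have hSC : sSup S ≤ μ C :=
    le_of_tendsto' hu fun n => hμB n ▸ measure_mono (Set.subset_iUnion B n)
  -- A finite-measure piece of `A \ C` would enlarge `C` beyond the supremum `sSup S`.
  have hAC : μ (A \ C) = 0 := by
    by_contra h
    obtain ⟨D, hDAC, hDm, hD0, hD_top⟩ := hμ (A \ C) (hA.diff hCm) (pos_iff_ne_zero.2 h)
    have hCD : μ (C ∪ D) ∈ S :=
      ⟨C ∪ D, ⟨Set.union_subset hCA (hDAC.trans Set.sdiff_subset), hCm.union hDm,
        measure_union_lt_top hC_top.lt_top hD_top⟩, rfl⟩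
    have hdisj : Disjoint C D := Set.disjoint_of_subset_right hDAC Set.disjoint_sdiff_right
    have : μ C < μ (C ∪ D) := by
      rw [measure_union hdisj hDm]
      exact ENNReal.lt_add_right hC_top hD0.ne'
    exact this.not_ge ((le_sSup hCD).trans hSC)
  calc μ A ≤ μ (A ∩ C) + μ (A \ C) := measure_le_inter_add_sdiff μ A C
    _ ≤ M := by rw [hAC, add_zero]; exact (measure_mono Set.inter_subset_right).trans hCM

lemma SemiFinite.lintegral_le_of_forall_setLIntegral_le_s12 {μ : Measure Ω} (hμ : SemiFinite μ)
    {g : Ω → ℝ≥0∞} {V : ℝ≥0∞}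
    (hV : ∀ B, MeasurableSet B → μ B < ∞ → ∫⁻ t in B, g t ∂μ ≤ V) : ∫⁻ t, g t ∂μ ≤ V := by
  rcases eq_or_ne V ∞ with rfl | hV_top
  · exact le_top
  rw [lintegral_def]
  refine iSup₂_le fun s hsg => ?_
  have hs : s.FinMeasSupp μ := by
    refine SimpleFunc.finMeasSupp_iff.2 fun c hc => ?_
    refine (hμ.measure_le_of_forall_subset_le (s.measurableSet_fiber c)
      fun B hBc hB hB_top => ?_).trans_lt (ENNReal.div_lt_top hV_top hc)
    rw [ENNReal.le_div_iff_mul_le (Or.inl hc) (Or.inr hV_top)]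
    calc μ B * c = ∫⁻ t in B, s t ∂μ := by
          rw [setLIntegral_congr_fun hB fun t ht => hBc ht, setLIntegral_const, mul_comm]
      _ ≤ ∫⁻ t in B, g t ∂μ := lintegral_mono hsg
      _ ≤ V := hV B hB hB_top
  calc s.lintegral μ = ∫⁻ t in Function.support s, s t ∂μ := by
        rw [setLIntegral_eq_of_support_subset subset_rfl, s.lintegral_eq_lintegral]
    _ ≤ ∫⁻ t in Function.support s, g t ∂μ := lintegral_mono hsg
    _ ≤ V := hV _ s.measurableSet_support hs

lemma vectorVariation_mono {α E : Type*} [NormedAddCommGroup E] (R : Set (Set α))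
    (ν : Set α → E) {A A' : Set α} (h : A ⊆ A') : vectorVariation R ν A ≤ vectorVariation R ν A' :=
  iSup_mono fun _ => iSup_le fun hP =>
    le_iSup_of_le (fun B hB => ⟨(hP B hB).1, (hP B hB).2.trans h⟩) le_rfl

section

variable {E : Type*} [NormedAddCommGroup E] [NormedSpace ℝ E]

lemma vectorVariation_setIntegral_le (μ : Measure Ω) (F : Ω → E) (A : Set Ω) :
    vectorVariation (finiteMeasureSets μ) (fun B => ∫ t in B, F t ∂μ) A ≤
      ∫⁻ t in A, ‖F t‖ₑ ∂μ := by
  refine iSup₂_le fun P hP => iSup_le fun hPd => ?_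
  calc ∑ B ∈ P, ENNReal.ofReal ‖∫ t in B, F t ∂μ‖
      ≤ ∑ B ∈ P, ∫⁻ t in B, ‖F t‖ₑ ∂μ := Finset.sum_le_sum fun B _ => by
        rw [ofReal_norm]; exact enorm_integral_le_lintegral_enorm _
    _ = ∫⁻ t in ⋃ B ∈ P, B, ‖F t‖ₑ ∂μ :=
        (lintegral_biUnion_finset hPd (fun B hB => (hP B hB).1.1) _).symm
    _ ≤ ∫⁻ t in A, ‖F t‖ₑ ∂μ := lintegral_mono_set (Set.iUnion₂_subset fun B hB => (hP B hB).2)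

lemma setLIntegral_enorm_le_vectorVariation [CompleteSpace E] {μ : Measure Ω} {F : Ω → E}
    {B : Set Ω} (hB : B ∈ finiteMeasureSets μ) (hF : IntegrableOn F B μ) :
    ∫⁻ t in B, ‖F t‖ₑ ∂μ ≤ vectorVariation (finiteMeasureSets μ) (fun A => ∫ t in A, F t ∂μ) B := by
  set ν := (μ.restrict B).withDensityᵥ F
  have hν_var : ν.variation B = ∫⁻ t in B, ‖F t‖ₑ ∂μ := by
    rw [Measure.variation_withDensityᵥ hF, withDensity_apply _ hB.1,
      Measure.restrict_restrict hB.1, Set.inter_self]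
  have hν : ∀ p ⊆ B, MeasurableSet p → ν p = ∫ t in p, F t ∂μ := fun p hpB hp => by
    rw [withDensityᵥ_apply hF hp, Measure.restrict_restrict hp, Set.inter_eq_left.2 hpB]
  rw [← hν_var]
  refine le_of_forall_lt fun a ha => ?_
  obtain ⟨P, hPB, hPd, hPm, haP⟩ := ν.exists_lt_sum_of_lt_variation hB.1 ha
  have hP : ∀ p ∈ P, p ∈ finiteMeasureSets μ ∧ p ⊆ B := fun p hp =>
    ⟨⟨hPm p hp, (measure_mono (hPB p hp)).trans_lt hB.2⟩, hPB p hp⟩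
  calc a < ∑ p ∈ P, ‖ν p‖ₑ := haP
    _ = ∑ p ∈ P, ENNReal.ofReal ‖∫ t in p, F t ∂μ‖ := Finset.sum_congr rfl fun p hp => by
        rw [hν p (hPB p hp) (hPm p hp), ofReal_norm]
    _ ≤ _ := le_iSup_of_le P (le_iSup_of_le hP (le_iSup_of_le
          (f := fun _ => ∑ p ∈ P, ENNReal.ofReal ‖∫ t in p, F t ∂μ‖) hPd le_rfl))

end

/-- `F` is Bochner integrable iff it is locally Bochner integrable
and `ν_F` has bounded variation. -/
theorem stmt12 (μ : Measure Ω) (hμ : LocallyDetermined μ)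
    (F : Ω → X) (hmeas : AEStronglyMeasurable F μ) :
    Integrable F μ ↔
      (LocBochnerIntegrable μ F ∧
        vectorVariation (finiteMeasureSets μ) (fun B => ∫ t in B, F t ∂μ) Set.univ
          < ∞) := by
  constructor
  · intro hF
    refine ⟨⟨hmeas, fun B hB => hF.indicator hB.1⟩, ?_⟩
    calc _ ≤ ∫⁻ t, ‖F t‖ₑ ∂μ := by simpa using vectorVariation_setIntegral_le μ F Set.univ
      _ < ∞ := hF.2
  · rintro ⟨⟨-, hloc⟩, hV⟩
    refine ⟨hmeas, lt_of_le_of_lt ?_ hV⟩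
    refine hμ.1.lintegral_le_of_forall_setLIntegral_le_s12 fun B hBm hB_top => ?_
    have hB : B ∈ finiteMeasureSets μ := ⟨hBm, hB_top⟩
    calc ∫⁻ t in B, ‖F t‖ₑ ∂μ ≤ _ := setLIntegral_enorm_le_vectorVariation hB
          ((integrable_indicator_iff hBm).1 (hloc B hB))
      _ ≤ _ := vectorVariation_mono _ _ (Set.subset_univ B)

end
end
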